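/- For each w in a finite Coxeter group W, the element e_w := π_{w^{-1} w_0} π̄_{w_0 w} of the biHecke monoid is idempotent, and its image set is exactly the lower interval [1, w]_L in left weak order. -/

import Mathlib

open scoped Classical

noncomputable section

variable {B W : Type*} [Group W] {M : CoxeterMatrix B}

/-- The elementary bubble antisorting operator `π_i` on a Coxeter group:
`w·π_i = w` if `i` is a right descent of `w`, and `w·π_i = w s_i` otherwise. -/
noncomputable def piOp (cs : CoxeterSystem M W) (i : B) : W → W :=
  fun w => if cs.IsRightDescent w i then w else w * cs.simple i

/-- The elementary bubble sorting operator `π̄_i` on a Coxeter group: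
`w·π̄_i = w s_i` if `i` is a right descent of `w`, and `w·π̄_i = w` otherwise. -/
noncomputable def pibOp (cs : CoxeterSystem M W) (i : B) : W → W :=
  fun w => if cs.IsRightDescent w i then w * cs.simple i else w

/-- The biHecke monoid: the submonoid of `Function.End W` generated by the antisorting
operators `π_i` and the sorting operators `π̄_i`. -/
noncomputable def biHecke (cs : CoxeterSystem M W) : Submonoid (Function.End W) :=
  Submonoid.closure ({f | ∃ i, f = piOp cs i} ∪ {f | ∃ i, f = pibOp cs i})

/-- Left weak order: `u ≤_L v` iff `ℓ(v u⁻¹) + ℓ(u) = ℓ(v)`. -/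
noncomputable def leL (cs : CoxeterSystem M W) (u v : W) : Prop :=
  cs.length (v * u⁻¹) + cs.length u = cs.length v

/-- Right weak order: `u ≤_R v` iff `ℓ(u) + ℓ(u⁻¹ v) = ℓ(v)`. -/
noncomputable def leR (cs : CoxeterSystem M W) (u v : W) : Prop :=
  cs.length u + cs.length (u⁻¹ * v) = cs.length v

/-- Bruhat order: `u ≤_B v` iff some reduced word of `v` has a subword with product `u`. -/
noncomputable def leB (cs : CoxeterSystem M W) (u v : W) : Prop :=
  ∃ l : List B, cs.IsReduced l ∧ cs.wordProd l = v ∧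
    ∃ l' : List B, l'.Sublist l ∧ cs.wordProd l' = u

/-- Right action of a word of operators: apply the operators from left to right. -/
noncomputable def actWord (ops : B → W → W) (l : List B) (w : W) : W :=
  l.foldl (fun x i => ops i x) w

/-- The function `e_w = π_{w⁻¹ w₀} π̄_{w₀ w}` (given reduced words `l1` for `w⁻¹ w₀` and
`l2` for `w₀ w`), acting on the right. -/
noncomputable def eIdem (cs : CoxeterSystem M W) (l1 l2 : List B) : W → W :=
  fun x => actWord (pibOp cs) l2 (actWord (piOp cs) l1 x)

/-- The parabolic subgroup `W_K`. -/
noncomputable def parab (cs : CoxeterSystem M W) (K : Set B) : Subgroup W :=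
  Subgroup.closure (cs.simple '' K)

/-- `K` is a right block of `w` if `w W_K = W_J w` for some `J`. -/
noncomputable def isRightBlock (cs : CoxeterSystem M W) (w : W) (K : Set B) : Prop :=
  ∃ J : Set B, (fun x => w * x) '' (parab cs K : Set W) = (fun x => x * w) '' (parab cs J : Set W)

/-- `J` is a left block of `w` if `w W_K = W_J w` for some `K`. -/
noncomputable def isLeftBlock (cs : CoxeterSystem M W) (w : W) (J : Set B) : Prop :=
  ∃ K : Set B, (fun x => w * x) '' (parab cs K : Set W) = (fun x => x * w) '' (parab cs J : Set W)

/-- The cutting relation: `v ⊑ w` iff `v = w^K` for some right block `K` of `w`, i.e.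
`w = v · u` with `u ∈ W_K` and `v` has no right descents in `K`. -/
noncomputable def cuts (cs : CoxeterSystem M W) (v w : W) : Prop :=
  ∃ K J : Set B,
    ((fun x => w * x) '' (parab cs K : Set W) = (fun x => x * w) '' (parab cs J : Set W)) ∧
    ∃ u ∈ parab cs K, w = v * u ∧ ∀ k ∈ K, ¬ cs.IsRightDescent v k

/-- Covering relation of left weak order. -/
noncomputable def covL (cs : CoxeterSystem M W) (x y : W) : Prop :=
  leL cs x y ∧ x ≠ y ∧ ∀ z, leL cs x z → leL cs z y → z = x ∨ z = y

end

/-!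
Everything rests on the reflection cocycle of the standard proof of the exchange property (the
action on `T × {±1}`), here the lift of `sᵢ ↦ (δ_{sᵢ}, sᵢ)` to `(W → ℤˣ) ⋊ W`: its signs
`η(w, t)` equal `-1` exactly at the left inversions `t` of `w`. Hence `ℓ(w)` counts left inversions, left multiplication by the longest
element `w₀` complements inversion sets (`ℓ(w₀ y) = ℓ(w₀) - ℓ(y)`), and left weak order has the
lifting property.

If `u ≤_L w`, then `π_{w⁻¹w₀}` sends `u` to `u w⁻¹ w₀` with lengths adding, and `π̄_{w₀w}` brings it
back down to `u`, so `e_w` fixes `[1, w]_L`. Conversely, along a reduced word of `w₀ w`, each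
`π̄_i` keeps the current element below `w₀` times the prefix read so far, so every value of `e_w`
lies in `[1, w]_L`. Idempotence follows.
-/

namespace CoxeterSystem

open List

variable {B W : Type*} [Group W] {M : CoxeterMatrix B} (cs : CoxeterSystem M W)

local prefix:100 "s " => cs.simple
local prefix:100 "π " => cs.wordProd
local prefix:100 "ℓ " => cs.length
local prefix:100 "lis " => cs.leftInvSeq

theorem prod_map_alternatingWord_two_mul {G : Type*} [Monoid G] (f : B → G) (i j : B) (k : ℕ) :
    ((alternatingWord i j (2 * k)).map f).prod = (f i * f j) ^ k := by
  induction k with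
  | zero => simp [alternatingWord]
  | succ k ih =>
    rw [show 2 * (k + 1) = 2 * k + 1 + 1 by ring, alternatingWord_succ, alternatingWord_succ]
    simp [ih, pow_succ]

theorem leftInvSeq_alternatingWord_two_mul (i j : B) :
    ∃ L : List W, lis (alternatingWord i j (2 * M i j)) = L ++ L := by
  set L := (range (M i j)).map fun k => π (alternatingWord j i (2 * k + 1))
  refine ⟨L, ?_⟩
  have hper : ∀ k, π (alternatingWord j i (2 * (M i j + k) + 1)) =
      π (alternatingWord j i (2 * k + 1)) := by
    intro k
    simp only [prod_alternatingWord_eq_mul_pow, Nat.not_even_bit1, if_false,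
      show ∀ n, (2 * n + 1) / 2 = n by omega, pow_add, simple_mul_simple_pow', one_mul]
  have hL : L ++ L = (range (2 * M i j)).map fun k => π (alternatingWord j i (2 * k + 1)) := by
    rw [two_mul, range_add, map_append, map_map]
    simp only [L, Function.comp_def, hper]
  rw [hL]
  apply ext_getElem (by simp)
  intro k hk _
  simp only [getElem_map, getElem_range]
  exact cs.getElem_leftInvSeq_alternatingWord i j _ k (by simpa using hk)

noncomputable def conjArrow : W →* MulAut (W → ℤˣ) :=
  mulAutArrow.comp (ConjAct.toConjAct : W ≃* ConjAct W).toMonoidHom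

@[simp] theorem conjArrow_apply (g : W) (f : W → ℤˣ) (t : W) :
    conjArrow g f t = f (g⁻¹ * t * g) := by
  change f ((ConjAct.toConjAct g)⁻¹ • t) = _
  rw [← ConjAct.toConjAct_inv, ConjAct.toConjAct_smul, inv_inv]

noncomputable def signGen (i : B) : (W → ℤˣ) ⋊[conjArrow] W :=
  ⟨fun t => if t = s i then -1 else 1, s i⟩

theorem prod_map_signGen (ω : List B) :
    (ω.map cs.signGen).prod = ⟨fun t => (-1) ^ (lis ω).count t, π ω⟩ := by
  induction ω with
  | nil => rfl
  | cons i ω ih =>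
    rw [map_cons, prod_cons, ih, SemidirectProduct.ext_iff]
    refine ⟨funext fun t => ?_, (cs.wordProd_cons i ω).symm⟩
    have hcount : ((lis ω).map (MulAut.conj (s i))).count t = (lis ω).count (s i * t * s i) := by
      rw [← count_map_of_injective _ _ (MulAut.conj (s i)).injective (s i * t * s i)]
      congr 1
      simp [mul_assoc]
    simp only [SemidirectProduct.mul_left, signGen, Pi.mul_apply, conjArrow_apply, inv_simple,
      leftInvSeq, count_cons, hcount, pow_add]
    rw [mul_comm]
    congr 1
    by_cases h : t = s i <;> simp [h, Ne.symm]

theorem isLiftable_signGen : M.IsLiftable cs.signGen := by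
  intro i j
  obtain ⟨L, hL⟩ := cs.leftInvSeq_alternatingWord_two_mul i j
  have hword : π (alternatingWord i j (2 * M i j)) = 1 := by
    rw [wordProd, prod_map_alternatingWord_two_mul, simple_mul_simple_pow]
  rw [← prod_map_alternatingWord_two_mul, prod_map_signGen, hL, hword, SemidirectProduct.ext_iff]
  refine ⟨funext fun t => ?_, rfl⟩
  simp [count_append, ← two_mul, pow_mul]

noncomputable def signHom : W →* (W → ℤˣ) ⋊[conjArrow] W := cs.lift ⟨cs.signGen, cs.isLiftable_signGen⟩

theorem signHom_wordProd (ω : List B) :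
    cs.signHom (π ω) = ⟨fun t => (-1) ^ (lis ω).count t, π ω⟩ := by
  rw [← prod_map_signGen, wordProd, map_list_prod, map_map]
  congr 1
  exact map_congr_left fun i _ => cs.lift_apply_simple cs.isLiftable_signGen i

noncomputable def reflSign (w : W) : W → ℤˣ := (cs.signHom w).left

theorem reflSign_wordProd (ω : List B) (t : W) :
    cs.reflSign (π ω) t = (-1) ^ (lis ω).count t := by
  rw [reflSign, signHom_wordProd]

theorem signHom_right (w : W) : (cs.signHom w).right = w := by
  obtain ⟨ω, rfl⟩ := cs.wordProd_surjective w
  rw [signHom_wordProd]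

theorem reflSign_mul (u v t : W) :
    cs.reflSign (u * v) t = cs.reflSign u t * cs.reflSign v (u⁻¹ * t * u) := by
  simp [reflSign, SemidirectProduct.mul_left, signHom_right]

theorem reflSign_simple (i : B) (t : W) :
    cs.reflSign (s i) t = if t = s i then -1 else 1 := by
  rw [← wordProd_singleton, reflSign_wordProd]
  by_cases h : t = s i <;> simp [h, Ne.symm]

theorem reflSign_inv (u t : W) : cs.reflSign u⁻¹ t = cs.reflSign u (u * t * u⁻¹) := by
  have h := cs.reflSign_mul u u⁻¹ (u * t * u⁻¹)
  rw [mul_inv_cancel, show u⁻¹ * (u * t * u⁻¹) * u = t by group] at h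
  have h1 : cs.reflSign 1 = 1 := congrArg SemidirectProduct.left (map_one cs.signHom)
  rw [h1, Pi.one_apply] at h
  rw [eq_inv_of_mul_eq_one_right h.symm, Int.units_inv_eq_self]

theorem reflSign_self_of_isReflection {t : W} (ht : cs.IsReflection t) : cs.reflSign t t = -1 := by
  obtain ⟨x, i, rfl⟩ := ht
  have hconj : x⁻¹ * (x * s i * x⁻¹) * x = s i := by group
  rw [mul_assoc, reflSign_mul, ← mul_assoc, hconj, reflSign_mul, reflSign_inv, inv_simple,
    simple_mul_simple_cancel_right, reflSign_simple, if_pos rfl, ← mul_assoc, mul_comm,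
    ← mul_assoc, Int.units_mul_self, one_mul]

theorem reflSign_wordProd_eq_neg_one_iff {ω : List B} (hω : cs.IsReduced ω) (t : W) :
    cs.reflSign (π ω) t = -1 ↔ t ∈ lis ω := by
  rw [reflSign_wordProd]
  by_cases ht : t ∈ lis ω
  · simp [ht, count_eq_one_of_mem hω.nodup_leftInvSeq ht]
  · simp [ht, count_eq_zero_of_not_mem ht]

theorem isLeftInversion_of_reflSign_eq_neg_one {w t : W} (h : cs.reflSign w t = -1) :
    cs.IsLeftInversion w t := by
  obtain ⟨ω, hω, rfl⟩ := cs.exists_isReduced w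
  exact cs.isLeftInversion_of_mem_leftInvSeq hω ((cs.reflSign_wordProd_eq_neg_one_iff hω t).1 h)

theorem reflSign_eq_neg_one_iff {w t : W} : cs.reflSign w t = -1 ↔ cs.IsLeftInversion w t := by
  refine ⟨cs.isLeftInversion_of_reflSign_eq_neg_one, fun ⟨ht, hlt⟩ => ?_⟩
  by_contra hne
  have hpos : cs.reflSign w t = 1 := (Int.units_eq_one_or _).resolve_right hne
  have hflip : cs.reflSign (t * w) t = -1 := by
    rw [reflSign_mul, reflSign_self_of_isReflection cs ht, inv_mul_cancel, one_mul, hpos, mul_one]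
  have hlt' := (cs.isLeftInversion_of_reflSign_eq_neg_one hflip).2
  rw [← mul_assoc, ht.mul_self, one_mul] at hlt'
  omega

theorem mem_leftInvSeq_iff_isLeftInversion {ω : List B} (hω : cs.IsReduced ω) (t : W) :
    t ∈ lis ω ↔ cs.IsLeftInversion (π ω) t := by
  rw [← reflSign_wordProd_eq_neg_one_iff cs hω, reflSign_eq_neg_one_iff]

theorem isLeftInversion_mul_iff {u v t : W} :
    cs.IsLeftInversion (u * v) t ↔
      (cs.IsLeftInversion u t ↔ ¬ cs.IsLeftInversion v (u⁻¹ * t * u)) := by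
  simp only [← reflSign_eq_neg_one_iff, reflSign_mul]
  rcases Int.units_eq_one_or (cs.reflSign u t) with h | h <;>
    rcases Int.units_eq_one_or (cs.reflSign v (u⁻¹ * t * u)) with h' | h' <;> simp [h, h']

theorem setOf_isLeftInversion_wordProd {ω : List B} (hω : cs.IsReduced ω) :
    {t | cs.IsLeftInversion (π ω) t} = (lis ω).toFinset := by
  ext t
  simp [mem_leftInvSeq_iff_isLeftInversion cs hω]

theorem finite_setOf_isLeftInversion (w : W) : {t | cs.IsLeftInversion w t}.Finite := by
  obtain ⟨ω, hω, rfl⟩ := cs.exists_isReduced w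
  rw [setOf_isLeftInversion_wordProd cs hω]
  exact Finset.finite_toSet _

theorem length_eq_ncard_setOf_isLeftInversion (w : W) :
    ℓ w = {t | cs.IsLeftInversion w t}.ncard := by
  obtain ⟨ω, hω, rfl⟩ := cs.exists_isReduced w
  rw [setOf_isLeftInversion_wordProd cs hω, Set.ncard_coe_finset,
    toFinset_card_of_nodup hω.nodup_leftInvSeq, length_leftInvSeq, hω.eq]

section Longest

variable {w0 : W} (hw0 : ∀ u : W, cs.length u ≤ cs.length w0)
include hw0

theorem isLeftInversion_longest {t : W} (ht : cs.IsReflection t) : cs.IsLeftInversion w0 t :=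
  ⟨ht, lt_of_le_of_ne (hw0 _) (ht.length_mul_right_ne w0)⟩

/-- Left multiplication by `w₀` complements the left inversion set inside the reflections. -/
theorem length_longest_mul (y : W) : ℓ (w0 * y) + ℓ y = ℓ w0 := by
  set conj : W → W := fun r => w0 * r * w0⁻¹
  have hmem : ∀ t, t ∈ conj '' {r | cs.IsLeftInversion y r} ↔
      cs.IsLeftInversion y (w0⁻¹ * t * w0) := fun t =>
    ⟨by rintro ⟨r, hr, rfl⟩; simpa [conj, mul_assoc] using hr,
      fun h => ⟨_, h, by simp [conj, mul_assoc]⟩⟩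
  have hlong : ∀ t, cs.IsLeftInversion y (w0⁻¹ * t * w0) → cs.IsLeftInversion w0 t := by
    intro t h
    refine cs.isLeftInversion_longest hw0 ?_
    have := (cs.isReflection_conj_iff w0 _).2 h.1
    rwa [show w0 * (w0⁻¹ * t * w0) * w0⁻¹ = t by group] at this
  have hunion : {t | cs.IsLeftInversion (w0 * y) t} ∪ conj '' {r | cs.IsLeftInversion y r} =
      {t | cs.IsLeftInversion w0 t} := by
    ext t
    simp only [Set.mem_union, hmem, Set.mem_ofPred_eq, isLeftInversion_mul_iff]
    have := hlong t
    tauto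
  have hdisj : Disjoint {t | cs.IsLeftInversion (w0 * y) t}
      (conj '' {r | cs.IsLeftInversion y r}) := by
    refine Set.disjoint_left.2 fun t ht ht' => ?_
    rw [hmem] at ht'
    rw [Set.mem_ofPred_eq, isLeftInversion_mul_iff] at ht
    exact (ht.1 (hlong t ht')) ht'
  have hconj : conj.Injective := fun a b h => by simpa [conj] using h
  rw [length_eq_ncard_setOf_isLeftInversion, length_eq_ncard_setOf_isLeftInversion cs y,
    length_eq_ncard_setOf_isLeftInversion cs w0, ← hunion, Set.ncard_union_eq hdisj
      (cs.finite_setOf_isLeftInversion _) ((cs.finite_setOf_isLeftInversion y).image conj),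
    Set.ncard_image_of_injective _ hconj]

theorem longest_mul_self : w0 * w0 = 1 := by
  have := cs.length_longest_mul hw0 w0
  exact cs.length_eq_zero_iff.mp (by omega)

theorem length_mul_longest (y : W) : ℓ (y * w0) + ℓ y = ℓ w0 := by
  have h := cs.length_longest_mul hw0 y⁻¹
  rwa [← inv_eq_of_mul_eq_one_left (cs.longest_mul_self hw0), ← mul_inv_rev, length_inv,
    length_inv, length_inv] at h

end Longest

end CoxeterSystem

section WeakOrder

open CoxeterSystem

variable {B W : Type*} [Group W] {M : CoxeterMatrix B} (cs : CoxeterSystem M W)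

theorem leL_mul_simple_of_isRightDescent {u v : W} {i : B} (h : leL cs u v)
    (hu : cs.IsRightDescent u i) : leL cs (u * cs.simple i) (v * cs.simple i) := by
  unfold leL at h ⊢
  have hus := cs.isRightDescent_iff.1 hu
  have hquot : v * cs.simple i * (u * cs.simple i)⁻¹ = v * u⁻¹ := by
    rw [mul_inv_rev, cs.inv_simple, mul_assoc, cs.simple_mul_simple_cancel_left]
  have hle := cs.length_mul_le (v * u⁻¹) (u * cs.simple i)
  rw [show v * u⁻¹ * (u * cs.simple i) = v * cs.simple i by group] at hle
  rcases cs.length_mul_simple v i with hv | hv <;> rw [hquot] <;> omega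

/-- `sᵢ` is a right inversion of `w sᵢ = x u` (`x := w sᵢ u⁻¹`) but not of `u`, so `u sᵢ u⁻¹` is
one of `x`, and `w u⁻¹ = x (u sᵢ u⁻¹)` is shorter than `x`. -/
theorem leL_of_leL_mul_simple {u w : W} {i : B} (h : leL cs u (w * cs.simple i))
    (hw : ¬ cs.IsRightDescent w i) (hu : ¬ cs.IsRightDescent u i) : leL cs u w := by
  unfold leL at h ⊢
  have hlen := cs.not_isRightDescent_iff.1 hw
  have hws : cs.IsLeftInversion (u⁻¹ * (w * cs.simple i * u⁻¹)⁻¹) (cs.simple i) := by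
    refine ⟨cs.isReflection_simple i, ?_⟩
    have e : cs.length (cs.simple i * w⁻¹) = cs.length (w * cs.simple i) := by
      rw [← cs.length_inv, mul_inv_rev, inv_inv, cs.inv_simple]
    rw [show u⁻¹ * (w * cs.simple i * u⁻¹)⁻¹ = cs.simple i * w⁻¹ by simp [mul_assoc],
      cs.simple_mul_simple_cancel_left, cs.length_inv, e]
    omega
  have hu' : ¬ cs.IsLeftInversion u⁻¹ (cs.simple i) := by
    rwa [cs.isLeftInversion_inv_iff, cs.isRightInversion_simple_iff_isRightDescent]
  have hx : cs.IsLeftInversion (w * cs.simple i * u⁻¹)⁻¹ (u⁻¹⁻¹ * cs.simple i * u⁻¹) := by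
    have := cs.isLeftInversion_mul_iff.1 hws
    tauto
  have hshort := hx.2
  rw [show u⁻¹⁻¹ * cs.simple i * u⁻¹ * (w * cs.simple i * u⁻¹)⁻¹ = (w * u⁻¹)⁻¹ by group,
    cs.length_inv, cs.length_inv] at hshort
  have htri := cs.length_mul_le (w * u⁻¹) u
  rw [inv_mul_cancel_right] at htri
  omega

end WeakOrder

section Operators

open CoxeterSystem

variable {B W : Type*}

theorem actWord_cons (ops : B → W → W) (i : B) (l : List B) (x : W) :
    actWord ops (i :: l) x = actWord ops l (ops i x) := rfl

theorem actWord_concat (ops : B → W → W) (l : List B) (i : B) (x : W) :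
    actWord ops (l ++ [i]) x = ops i (actWord ops l x) :=
  List.foldl_concat ..

variable [Group W] {M : CoxeterMatrix B} (cs : CoxeterSystem M W)

theorem actWord_piOp_eq_mul_wordProd : ∀ (l : List B) (x : W),
    cs.length (x * cs.wordProd l) = cs.length x + l.length →
    actWord (piOp cs) l x = x * cs.wordProd l
  | [], x, _ => by simp [actWord]
  | i :: l, x, h => by
    rw [wordProd_cons, ← mul_assoc, List.length_cons] at h
    have hle := cs.length_mul_le (x * cs.simple i) (cs.wordProd l)
    have hl := cs.length_wordProd_le l
    have hxs : cs.length (x * cs.simple i) = cs.length x + 1 := by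
      rcases cs.length_mul_simple x i with h' | h' <;> omega
    have hpi : piOp cs i x = x * cs.simple i := if_neg (by unfold IsRightDescent; omega)
    rw [actWord_cons, hpi, actWord_piOp_eq_mul_wordProd l _ (by omega), wordProd_cons, mul_assoc]

theorem actWord_pibOp_eq_mul_wordProd : ∀ (l : List B) (x : W),
    cs.length (x * cs.wordProd l) + l.length = cs.length x →
    actWord (pibOp cs) l x = x * cs.wordProd l
  | [], x, _ => by simp [actWord]
  | i :: l, x, h => by
    rw [wordProd_cons, ← mul_assoc, List.length_cons] at h
    have hle := cs.length_mul_le (x * cs.simple i * cs.wordProd l) (cs.wordProd l)⁻¹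
    rw [mul_inv_cancel_right, length_inv] at hle
    have hl := cs.length_wordProd_le l
    have hxs : cs.length (x * cs.simple i) + 1 = cs.length x := by
      rcases cs.length_mul_simple x i with h' | h' <;> omega
    have hpi : pibOp cs i x = x * cs.simple i := if_pos (by unfold IsRightDescent; omega)
    rw [actWord_cons, hpi, actWord_pibOp_eq_mul_wordProd l _ (by omega), wordProd_cons, mul_assoc]

variable {w0 : W} (hw0 : ∀ u : W, cs.length u ≤ cs.length w0)
include hw0

theorem leL_actWord_pibOp {l : List B} (hl : cs.IsReduced l) (y : W) :
    leL cs (actWord (pibOp cs) l y) (w0 * cs.wordProd l) := by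
  induction l using List.reverseRecOn with
  | nil =>
    simpa [actWord, leL] using cs.length_longest_mul hw0 y⁻¹
  | append_singleton l i ih =>
    have hl' : cs.IsReduced l := by simpa using hl.take l.length
    set u := actWord (pibOp cs) l y
    rw [actWord_concat, wordProd_append, wordProd_singleton, ← mul_assoc]
    by_cases hu : cs.IsRightDescent u i
    · rw [pibOp, if_pos hu]
      exact leL_mul_simple_of_isRightDescent cs (ih hl') hu
    · rw [pibOp, if_neg hu]
      refine leL_of_leL_mul_simple cs ?_ ?_ hu
      · rw [simple_mul_simple_cancel_right]
        exact ih hl'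
      · have h1 := cs.length_longest_mul hw0 (cs.wordProd l)
        have h2 := cs.length_longest_mul hw0 (cs.wordProd (l ++ [i]))
        rw [hl'.eq] at h1
        rw [hl.eq, wordProd_append, wordProd_singleton, ← mul_assoc, List.length_append] at h2
        unfold IsRightDescent
        rw [simple_mul_simple_cancel_right]
        simp only [List.length_singleton] at h2
        omega

theorem eIdem_apply_of_leL {w : W} {l1 l2 : List B} (h1 : cs.IsReduced l1)
    (h1' : cs.wordProd l1 = w⁻¹ * w0) (h2 : cs.IsReduced l2) (h2' : cs.wordProd l2 = w0 * w)
    {u : W} (hu : leL cs u w) : eIdem cs l1 l2 u = u := by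
  unfold leL at hu
  have hl1 := cs.length_mul_longest hw0 w⁻¹
  have hl2 := cs.length_longest_mul hw0 w
  have hx := cs.length_mul_longest hw0 (u * w⁻¹)
  rw [← h1', h1.eq, length_inv] at hl1
  rw [← h2', h2.eq] at hl2
  rw [← cs.length_inv (u * w⁻¹), mul_inv_rev, inv_inv] at hx
  have hpi : actWord (piOp cs) l1 u = u * w⁻¹ * w0 := by
    rw [actWord_piOp_eq_mul_wordProd cs l1 u (by rw [h1', ← mul_assoc]; omega), h1', mul_assoc]
  have hback : u * w⁻¹ * w0 * cs.wordProd l2 = u := by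
    rw [h2', ← mul_assoc, mul_assoc (u * w⁻¹), cs.longest_mul_self hw0, mul_one,
      inv_mul_cancel_right]
  unfold eIdem
  rw [hpi, actWord_pibOp_eq_mul_wordProd cs l2 _ (by rw [hback]; omega), hback]

end Operators

theorem eIdem_idempotent_image_general {B W : Type*} [Group W] {M : CoxeterMatrix B}
    (cs : CoxeterSystem M W) (w w0 : W) (hw0 : ∀ u : W, cs.length u ≤ cs.length w0)
    (l1 l2 : List B) (h1 : cs.IsReduced l1) (h1' : cs.wordProd l1 = w⁻¹ * w0)
    (h2 : cs.IsReduced l2) (h2' : cs.wordProd l2 = w0 * w) :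
    (∀ x, eIdem cs l1 l2 (eIdem cs l1 l2 x) = eIdem cs l1 l2 x) ∧
    Set.range (eIdem cs l1 l2) = {u : W | leL cs u w} := by
  have hfix : ∀ u, leL cs u w → eIdem cs l1 l2 u = u :=
    fun u => eIdem_apply_of_leL cs hw0 h1 h1' h2 h2'
  have hmaps : ∀ x, leL cs (eIdem cs l1 l2 x) w := fun x => by
    have := leL_actWord_pibOp cs hw0 h2 (actWord (piOp cs) l1 x)
    rwa [h2', ← mul_assoc, cs.longest_mul_self hw0, one_mul] at this
  refine ⟨fun x => hfix _ (hmaps x), Set.ext fun u => ⟨?_, fun hu => ⟨u, hfix u hu⟩⟩⟩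
  rintro ⟨x, rfl⟩
  exact hmaps x

/-- The element `e_w := π_{w⁻¹w₀} π̄_{w₀w}` of the biHecke monoid is idempotent, with
image set the lower interval `[1, w]_L` in left weak order. -/
theorem eIdem_idempotent_image {B W : Type*} [Group W] [Finite W] {M : CoxeterMatrix B}
    (cs : CoxeterSystem M W) (w w0 : W) (hw0 : ∀ u : W, cs.length u ≤ cs.length w0)
    (l1 l2 : List B) (h1 : cs.IsReduced l1) (h1' : cs.wordProd l1 = w⁻¹ * w0)
    (h2 : cs.IsReduced l2) (h2' : cs.wordProd l2 = w0 * w) :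
    (∀ x, eIdem cs l1 l2 (eIdem cs l1 l2 x) = eIdem cs l1 l2 x) ∧
    Set.range (eIdem cs l1 l2) = {u : W | leL cs u w} :=
  eIdem_idempotent_image_general cs w w0 hw0 l1 l2 h1 h1' h2 h2'
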